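/- Let r ≥ 2, ℓ ≥ 3 and m ≥ 2ℓ be integers, and let F₁ = (P_ℓ ∪ K̄_m) ⊗ T(m(r−1), r−1), F₂ = mK₂ ⊗ mK₂ ⊗ T(m(r−2), r−2), F₃ = (2K_{ℓ−1} ∪ K̄_m) ⊗ (K₂ ∪ K̄_m) ⊗ T(m(r−2), r−2), and F₄ = (K_{ℓ−1} ∪ K̄_m) ⊗ (K_{ℓ−1} ∪ K̄_m) ⊗ T(m(r−2), r−2). If H is any P_ℓ-free graph and n ≥ |H|, then the graph H ⊗ T(n − |H|, r−1) is {F₁, F₂, F₃, F₄}-free; indeed, for each 1 ≤ i ≤ 4, after deleting any r−1 independent sets from F_i the remaining graph still contains a copy of P_ℓ. -/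

import Mathlib

open SimpleGraph

/-- `G` contains a (not necessarily induced) copy of `F`. -/
def ContainsCopy {V W : Type*} (F : SimpleGraph V) (G : SimpleGraph W) : Prop :=
  ∃ f : V → W, Function.Injective f ∧ ∀ ⦃a b : V⦄, F.Adj a b → G.Adj (f a) (f b)

/-- The join `G ⊗ H` of two graphs. -/
def gJoin {α β : Type*} (G : SimpleGraph α) (H : SimpleGraph β) : SimpleGraph (α ⊕ β) where
  Adj x y :=
    match x, y with
    | Sum.inl a, Sum.inl b => G.Adj a b
    | Sum.inr a, Sum.inr b => H.Adj a b
    | _, _ => True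
  symm := ⟨by rintro (a|a) (b|b) h <;> simp_all <;> exact h.symm⟩
  loopless := ⟨by rintro (a|a) h <;> simp_all⟩

/-- The disjoint union `G ∪ H` of two graphs. -/
def gUnion {α β : Type*} (G : SimpleGraph α) (H : SimpleGraph β) : SimpleGraph (α ⊕ β) where
  Adj x y :=
    match x, y with
    | Sum.inl a, Sum.inl b => G.Adj a b
    | Sum.inr a, Sum.inr b => H.Adj a b
    | _, _ => False
  symm := ⟨by rintro (a|a) (b|b) h <;> simp_all <;> exact h.symm⟩
  loopless := ⟨by rintro (a|a) h <;> simp_all⟩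

/-- The disjoint union `mH` of `m` copies of `H`. -/
def gCopies (m : ℕ) {α : Type*} (H : SimpleGraph α) : SimpleGraph (Fin m × α) where
  Adj x y := x.1 = y.1 ∧ H.Adj x.2 y.2
  symm := ⟨by rintro ⟨i, a⟩ ⟨j, b⟩ ⟨h1, h2⟩; exact ⟨h1.symm, h2.symm⟩⟩
  loopless := ⟨by rintro ⟨i, a⟩ ⟨_, h⟩; exact H.irrefl h⟩

/-- Number of edges of a graph. -/
noncomputable def edgeCount {V : Type*} (G : SimpleGraph V) : ℕ := G.edgeSet.ncard

/-- `F₁ = (P_ℓ ∪ K̄_m) ⊗ T(m(r-1), r-1)`. -/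
def F₁ (ℓ r m : ℕ) :=
  gJoin (gUnion (pathGraph ℓ) (⊥ : SimpleGraph (Fin m))) (turanGraph (m * (r - 1)) (r - 1))

/-- `F₂ = mK₂ ⊗ mK₂ ⊗ T(m(r-2), r-2)`. -/
def F₂ (r m : ℕ) :=
  gJoin (gCopies m (⊤ : SimpleGraph (Fin 2)))
    (gJoin (gCopies m (⊤ : SimpleGraph (Fin 2))) (turanGraph (m * (r - 2)) (r - 2)))

/-- `F₃ = (2K_{ℓ-1} ∪ K̄_m) ⊗ (K₂ ∪ K̄_m) ⊗ T(m(r-2), r-2)`. -/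
def F₃ (ℓ r m : ℕ) :=
  gJoin (gUnion (gCopies 2 (⊤ : SimpleGraph (Fin (ℓ - 1)))) (⊥ : SimpleGraph (Fin m)))
    (gJoin (gUnion (⊤ : SimpleGraph (Fin 2)) (⊥ : SimpleGraph (Fin m)))
      (turanGraph (m * (r - 2)) (r - 2)))

/-- `F₄ = (K_{ℓ-1} ∪ K̄_m) ⊗ (K_{ℓ-1} ∪ K̄_m) ⊗ T(m(r-2), r-2)`. -/
def F₄ (ℓ r m : ℕ) :=
  gJoin (gUnion (⊤ : SimpleGraph (Fin (ℓ - 1))) (⊥ : SimpleGraph (Fin m)))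
    (gJoin (gUnion (⊤ : SimpleGraph (Fin (ℓ - 1))) (⊥ : SimpleGraph (Fin m)))
      (turanGraph (m * (r - 2)) (r - 2)))

/-- After deleting any `k` independent sets from `F`, the remaining induced subgraph still
contains a copy of `P_ℓ`. -/
def DelIndepStillPath {α : Type*} (F : SimpleGraph α) (ℓ k : ℕ) : Prop :=
  ∀ I : Fin k → Set α, (∀ j, ∀ a ∈ I j, ∀ b ∈ I j, ¬ F.Adj a b) →
    ContainsCopy (pathGraph ℓ) (F.induce (⋃ j, I j)ᶜ)

/-!
Each `F_i` is the join of `r` parts with at least `m ≥ ⌈ℓ/2⌉` vertices each (its first one or two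
factors and the classes of its Turán factor), so every independent set of `F_i` lies inside one
part. Deleting `r - 1` independent sets therefore either spares two whole parts, which span a
complete bipartite graph containing `P_ℓ`, or spares one whole part while removing an independent
set from every other part. In the second case, if the spared part carries the graph planted in the
first parts (a `P_ℓ`, or a `K_{ℓ-1}` next to an edge), it yields `P_ℓ` on its own or with a
surviving end of the edge (a `K_ℓ`). Otherwise some planted part other than the spared one keeps
`⌊ℓ/2⌋` vertices (one from each edge of a matching, or all but one vertex of a clique), and these
alternate with the spared part along a `P_ℓ`. Finally, the colour classes of `T(n - |H|, r - 1)`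
pulled back along a copy of `F_i` in `H ⊗ T(n - |H|, r - 1)` are `r - 1` independent sets, and what
remains of `F_i` lies in `H`.
-/

variable {V W α β ι : Type*}

theorem containsCopy_iff_isContained {F : SimpleGraph V} {G : SimpleGraph W} :
    ContainsCopy F G ↔ F ⊑ G :=
  ⟨fun ⟨f, hf, hadj⟩ => ⟨⟨⟨f, fun h => hadj h⟩, hf⟩⟩,
    fun ⟨f⟩ => ⟨f, f.injective, fun _ _ h => f.toHom.map_adj h⟩⟩

theorem isContained_induce_iff {A : SimpleGraph α} {G : SimpleGraph V} {s : Set V} :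
    A ⊑ G.induce s ↔ ∃ f : Copy A G, ∀ a, f a ∈ s := by
  constructor
  · rintro ⟨f⟩
    exact ⟨(Copy.induce G s).comp f, fun a => (f a).2⟩
  · rintro ⟨f, hf⟩
    exact ⟨⟨⟨fun a => ⟨f a, hf a⟩, fun h => f.toHom.map_adj h⟩,
      fun a b h => f.injective (congrArg Subtype.val h)⟩⟩

theorem pathGraph_isContained_completeBipartiteGraph (ℓ : ℕ) :
    pathGraph ℓ ⊑ completeBipartiteGraph (Fin ((ℓ + 1) / 2)) (Fin (ℓ / 2)) := by
  let f : Fin ℓ → Fin ((ℓ + 1) / 2) ⊕ Fin (ℓ / 2) := fun i =>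
    if h : i.val % 2 = 0 then .inl ⟨i / 2, by omega⟩ else .inr ⟨i / 2, by omega⟩
  refine ⟨⟨⟨f, fun {i j} hij => ?_⟩, fun i j hij => ?_⟩⟩
  · rw [pathGraph_adj] at hij
    have : i.val % 2 = 0 ↔ j.val % 2 ≠ 0 := by omega
    by_cases hi : i.val % 2 = 0 <;> simp_all [f]
  · apply Fin.ext
    by_cases hi : i.val % 2 = 0 <;> by_cases hj : j.val % 2 = 0 <;> simp_all [f] <;> omega

theorem gCopies_isContained_pathGraph (ℓ : ℕ) :
    gCopies (ℓ / 2) (⊤ : SimpleGraph (Fin 2)) ⊑ pathGraph ℓ := by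
  let f : Fin (ℓ / 2) × Fin 2 → Fin ℓ := fun x => ⟨2 * x.1 + x.2, by omega⟩
  refine ⟨⟨⟨f, fun {x y} ⟨h₁, h₂⟩ => ?_⟩, fun x y hxy => ?_⟩⟩
  · have := Fin.val_eq_of_eq h₁
    have := Fin.val_ne_of_ne h₂
    simp only [pathGraph_adj, f]
    omega
  · have := Fin.val_eq_of_eq (show f x = f y from hxy)
    simp only [f] at this
    exact Prod.ext (Fin.ext (by omega)) (Fin.ext (by omega))

theorem top_succ_isContained_induce_insert {G : SimpleGraph V} {s : Set V} {n : ℕ} {b : V}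
    (h : (⊤ : SimpleGraph (Fin n)) ⊑ G.induce s) (hb : ∀ x ∈ s, G.Adj x b) :
    (⊤ : SimpleGraph (Fin (n + 1))) ⊑ G.induce (insert b s) := by
  obtain ⟨f, hf⟩ := isContained_induce_iff.1 h
  let g : Fin (n + 1) → V := Fin.lastCases b f
  have hg : ∀ ⦃i j⦄, (⊤ : SimpleGraph (Fin (n + 1))).Adj i j → G.Adj (g i) (g j) := by
    intro i j hij
    induction i using Fin.lastCases <;> induction j using Fin.lastCases
    · exact absurd rfl hij
    all_goals simp_all [g, (hb _ (hf _)).symm]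
    exact f.toHom.map_adj ((top_adj _ _).2 hij)
  refine isContained_induce_iff.2
    ⟨⟨⟨g, fun h => hg h⟩, Hom.injective_of_top_hom ⟨g, fun h => hg h⟩⟩, fun i => ?_⟩
  induction i using Fin.lastCases <;> simp [g, hf]

section Survivors

variable {F : SimpleGraph V} {S P : Set V}

theorem exists_embedding_of_gCopies_isContained {t : ℕ} (hD : F.IsIndepSet (Sᶜ ∩ P))
    (hM : gCopies t (⊤ : SimpleGraph (Fin 2)) ⊑ F.induce P) :
    ∃ e : Fin t ↪ V, ∀ i, e i ∈ S ∩ P := by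
  obtain ⟨f, hfP⟩ := isContained_induce_iff.1 hM
  have hside : ∀ i, ∃ c, f (i, c) ∈ S := by
    intro i
    by_contra! h
    exact hD ⟨h 0, hfP _⟩ ⟨h 1, hfP _⟩ (f.injective.ne (by simp))
      (f.toHom.map_adj ⟨rfl, by simp⟩)
  choose c hc using hside
  exact ⟨⟨fun i => f (i, c i), fun i j h => congrArg Prod.fst (f.injective h)⟩,
    fun i => ⟨hc i, hfP _⟩⟩

theorem exists_embedding_of_top_isContained {n : ℕ} (hD : F.IsIndepSet (Sᶜ ∩ P))
    (hK : (⊤ : SimpleGraph (Fin (n + 1))) ⊑ F.induce P) :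
    ∃ e : Fin n ↪ V, ∀ i, e i ∈ S ∩ P := by
  obtain ⟨f, hfP⟩ := isContained_induce_iff.1 hK
  obtain ⟨p, hp⟩ : ∃ p, ∀ q, q ≠ p → f q ∈ S := by
    by_cases h : ∀ p, f p ∈ S
    · exact ⟨0, fun q _ => h q⟩
    obtain ⟨p, hp⟩ := not_forall.1 h
    refine ⟨p, fun q hqp => by_contra fun hq => ?_⟩
    exact hD ⟨hq, hfP q⟩ ⟨hp, hfP p⟩ (f.injective.ne hqp)
      (f.toHom.map_adj ((top_adj _ _).2 hqp))
  exact ⟨p.succAboveEmb.trans f.toEmbedding, fun i => ⟨hp _ (Fin.succAbove_ne p i), hfP _⟩⟩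

end Survivors

theorem completeBipartiteGraph_isContained_induce {F : SimpleGraph V} {π : V → ι} {s t : ℕ}
    (hπ : ∀ ⦃a b⦄, π a ≠ π b → F.Adj a b)
    {S : Set V} {p q : ι} (hpq : p ≠ q) (a : Fin s ↪ V) (b : Fin t ↪ V)
    (ha : ∀ i, a i ∈ S ∩ π ⁻¹' {p}) (hb : ∀ i, b i ∈ S ∩ π ⁻¹' {q}) :
    completeBipartiteGraph (Fin s) (Fin t) ⊑ F.induce S := by
  have hab : ∀ i j, F.Adj (a i) (b j) := fun i j => hπ (by rw [(ha i).2, (hb j).2]; exact hpq)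
  refine isContained_induce_iff.2 ⟨⟨⟨Sum.elim a b, ?_⟩, ?_⟩, ?_⟩
  · rintro (i | i) (j | j) h <;> simp_all [(hab _ _).symm]
  · rintro (i | i) (j | j) h <;> simp_all [(hab _ _).ne, (hab _ _).ne']
  · rintro (i | i)
    exacts [(ha i).1, (hb i).1]

theorem exists_parts_subset_compl_iUnion [Fintype ι] {F : SimpleGraph V} {π : V → ι}
    (hπ : ∀ ⦃a b⦄, π a ≠ π b → F.Adj a b) {k : ℕ} (hk : k < Fintype.card ι)
    (I : Fin k → Set V) (hI : ∀ j, F.IsIndepSet (I j)) :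
    (∃ p q, p ≠ q ∧ π ⁻¹' {p} ⊆ (⋃ j, I j)ᶜ ∧ π ⁻¹' {q} ⊆ (⋃ j, I j)ᶜ) ∨
      ((∃ p, π ⁻¹' {p} ⊆ (⋃ j, I j)ᶜ) ∧ ∀ q, F.IsIndepSet ((⋃ j, I j) ∩ π ⁻¹' {q})) := by
  classical
  have : Nonempty ι := Fintype.card_pos_iff.1 (by omega)
  have hpart : ∀ j, ∃ c, ∀ x ∈ I j, π x = c := by
    intro j
    rcases (I j).eq_empty_or_nonempty with h | ⟨x₀, hx₀⟩
    · exact ⟨Classical.arbitrary ι, by simp [h]⟩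
    refine ⟨π x₀, fun x hx => by_contra fun h => ?_⟩
    exact hI j hx hx₀ (ne_of_apply_ne π h) (hπ h)
  choose c hc using hpart
  have hfree : ∀ p ∉ Set.range c, π ⁻¹' {p} ⊆ (⋃ j, I j)ᶜ := by
    intro p hp x hx hxI
    obtain ⟨j, hj⟩ := Set.mem_iUnion.1 hxI
    exact hp ⟨j, (hc j x hj).symm.trans hx⟩
  by_cases hinj : Function.Injective c
  · right
    refine ⟨?_, ?_⟩
    · obtain ⟨p, hp⟩ : ∃ p, p ∉ Set.range c := by
        by_contra! h
        have := Fintype.card_le_of_surjective c h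
        simp only [Fintype.card_fin] at this
        omega
      exact ⟨p, hfree p hp⟩
    · intro q x ⟨hxI, hx⟩ y ⟨hyI, hy⟩ hne
      obtain ⟨i, hi⟩ := Set.mem_iUnion.1 hxI
      obtain ⟨j, hj⟩ := Set.mem_iUnion.1 hyI
      obtain rfl : i = j :=
        hinj ((hc i x hi).symm.trans (hx.trans (hy.symm.trans (hc j y hj))))
      exact hI i hi hj hne
  · left
    have hcard : (Finset.univ.image c).card < k := by
      refine lt_of_le_of_ne (Finset.card_image_le.trans_eq (Finset.card_fin k))
        fun h => hinj ?_
      have h := Finset.card_image_iff.1 (h.trans (Finset.card_fin k).symm)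
      exact fun i j => h (by simp) (by simp)
    obtain ⟨p, hp, q, hq, hpq⟩ := Finset.one_lt_card.1
      (show 1 < (Finset.univ.image c)ᶜ.card by rw [Finset.card_compl]; omega)
    simp only [Finset.mem_compl, Finset.mem_image, Finset.mem_univ, true_and] at hp hq
    exact ⟨p, q, hpq, hfree p hp, hfree q hq⟩

structure IsJoinPartition (F : SimpleGraph V) (π : V → ι) (s : ℕ) : Prop where
  adj : ∀ ⦃a b⦄, π a ≠ π b → F.Adj a b
  exists_embedding : ∀ p, ∃ e : Fin s ↪ V, ∀ i, π (e i) = p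

namespace IsJoinPartition

variable {F : SimpleGraph V} {π : V → ι} {ℓ : ℕ}

theorem pathGraph_isContained_induce (hP : IsJoinPartition F π ((ℓ + 1) / 2)) {S : Set V}
    {p q : ι} (hp : π ⁻¹' {p} ⊆ S) (hqp : q ≠ p) (b : Fin (ℓ / 2) ↪ V)
    (hb : ∀ i, b i ∈ S ∩ π ⁻¹' {q}) :
    pathGraph ℓ ⊑ F.induce S := by
  obtain ⟨a, ha⟩ := hP.exists_embedding p
  exact (pathGraph_isContained_completeBipartiteGraph ℓ).trans
    (completeBipartiteGraph_isContained_induce hP.adj hqp.symm a b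
      (fun i => ⟨hp (ha i), ha i⟩) hb)

variable [Fintype ι] {k : ℕ}

theorem delIndepStillPath (hP : IsJoinPartition F π ((ℓ + 1) / 2)) (hk : k < Fintype.card ι)
    (hone : ∀ (S : Set V) p, π ⁻¹' {p} ⊆ S → (∀ q, F.IsIndepSet (Sᶜ ∩ π ⁻¹' {q})) →
      pathGraph ℓ ⊑ F.induce S) :
    DelIndepStillPath F ℓ k := by
  intro I hI
  rw [containsCopy_iff_isContained]
  rcases exists_parts_subset_compl_iUnion hP.adj hk I (fun j x hx y hy _ => hI j x hx y hy)
    with ⟨p, q, hpq, hp, hq⟩ | ⟨⟨p, hp⟩, hD⟩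
  · obtain ⟨b, hb⟩ := hP.exists_embedding q
    exact hP.pathGraph_isContained_induce hp hpq.symm
      ((Fin.castLEEmb (Nat.div_le_div_right (Nat.le_succ ℓ))).trans b)
      fun i => ⟨hq (hb _), hb _⟩
  · exact hone _ p hp (by simpa only [compl_compl] using hD)

theorem delIndepStillPath_of_pathGraph (hP : IsJoinPartition F π ((ℓ + 1) / 2))
    (hk : k < Fintype.card ι) {p₀ : ι} (h₀ : pathGraph ℓ ⊑ F.induce (π ⁻¹' {p₀})) :
    DelIndepStillPath F ℓ k := by
  refine hP.delIndepStillPath hk fun S p hp hD => ?_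
  by_cases hpp : p = p₀
  · subst hpp
    exact h₀.trans (F.induceHomOfLE hp).isContained
  obtain ⟨b, hb⟩ :=
    exists_embedding_of_gCopies_isContained (hD p₀) ((gCopies_isContained_pathGraph ℓ).trans h₀)
  exact hP.pathGraph_isContained_induce hp (Ne.symm hpp) b hb

theorem delIndepStillPath_of_gCopies (hP : IsJoinPartition F π ((ℓ + 1) / 2))
    (hk : k < Fintype.card ι) {t : ℕ} (ht : ℓ / 2 ≤ t) {p₀ p₁ : ι} (hp₀₁ : p₀ ≠ p₁)
    (h₀ : gCopies t (⊤ : SimpleGraph (Fin 2)) ⊑ F.induce (π ⁻¹' {p₀}))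
    (h₁ : gCopies t (⊤ : SimpleGraph (Fin 2)) ⊑ F.induce (π ⁻¹' {p₁})) :
    DelIndepStillPath F ℓ k := by
  refine hP.delIndepStillPath hk fun S p hp hD => ?_
  obtain ⟨q, hqp, hq⟩ :
      ∃ q, q ≠ p ∧ gCopies t (⊤ : SimpleGraph (Fin 2)) ⊑ F.induce (π ⁻¹' {q}) := by
    by_cases hp₀ : p₀ = p
    · exact ⟨p₁, fun h => hp₀₁ (hp₀.trans h.symm), h₁⟩
    · exact ⟨p₀, hp₀, h₀⟩
  obtain ⟨b, hb⟩ := exists_embedding_of_gCopies_isContained (hD q) hq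
  exact hP.pathGraph_isContained_induce hp hqp ((Fin.castLEEmb ht).trans b) fun i => hb _

theorem delIndepStillPath_of_top (hP : IsJoinPartition F π ((ℓ + 1) / 2))
    (hk : k < Fintype.card ι) (hℓ : 3 ≤ ℓ) {p₀ p₁ : ι} (hp₀₁ : p₀ ≠ p₁)
    (h₀ : (⊤ : SimpleGraph (Fin (ℓ - 1))) ⊑ F.induce (π ⁻¹' {p₀}))
    (h₁ : (⊤ : SimpleGraph (Fin 2)) ⊑ F.induce (π ⁻¹' {p₁})) :
    DelIndepStillPath F ℓ k := by
  obtain ⟨n, rfl⟩ : ∃ n, ℓ = n + 2 := ⟨ℓ - 2, by omega⟩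
  refine hP.delIndepStillPath hk fun S p hp hD => ?_
  by_cases hpp : p = p₀
  · subst hpp
    obtain ⟨b, hb⟩ := exists_embedding_of_top_isContained (hD p₁) h₁
    have hK : (⊤ : SimpleGraph (Fin (n + 2))) ⊑ F.induce (insert (b 0) (π ⁻¹' {p})) :=
      top_succ_isContained_induce_insert h₀ fun x hx =>
        hP.adj (by rw [hx, (hb 0).2]; exact hp₀₁)
    exact (IsContained.of_le le_top).trans
      (hK.trans (F.induceHomOfLE (Set.insert_subset (hb 0).1 hp)).isContained)
  obtain ⟨b, hb⟩ := exists_embedding_of_top_isContained (n := n) (hD p₀) h₀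
  exact hP.pathGraph_isContained_induce hp (Ne.symm hpp)
    ((Fin.castLEEmb (by omega)).trans b) fun i => hb _

end IsJoinPartition

def gJoinParts (π : β → ι) : α ⊕ β → Option ι := Sum.elim (fun _ => none) (some ∘ π)

theorem isJoinPartition_turanGraph {s m k : ℕ} (hs : s ≤ m) :
    IsJoinPartition (turanGraph (m * k) k) Fin.modNat s where
  adj v w h := turanGraph_adj.2 fun h' => h (Fin.ext h')
  exists_embedding q :=
    ⟨(Fin.castLEEmb hs).trans ⟨fun i => Fin.mkDivMod i q, fun i j h => by
      simpa using congrArg Fin.divNat h⟩, fun i => Fin.modNat_mkDivMod _ _⟩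

theorem IsJoinPartition.gJoin {H : SimpleGraph β} {π : β → ι} {s : ℕ} (G : SimpleGraph α)
    (e : Fin s ↪ α) (hH : IsJoinPartition H π s) :
    IsJoinPartition (gJoin G H) (gJoinParts π) s where
  adj := by
    rintro (a | a) (b | b) h
    exacts [absurd rfl h, trivial, trivial, hH.adj fun h' => h (by simp [gJoinParts, h'])]
  exists_embedding
    | none => ⟨e.trans .inl, fun _ => rfl⟩
    | some p =>
      let ⟨e', he'⟩ := hH.exists_embedding p
      ⟨e'.trans .inr, fun i => by simp [gJoinParts, he']⟩

theorem isContained_gJoin_induce_none (G : SimpleGraph α) (H : SimpleGraph β) (π : β → ι) :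
    G ⊑ (gJoin G H).induce (gJoinParts π ⁻¹' {none}) :=
  isContained_induce_iff.2 ⟨⟨⟨Sum.inl, fun h => h⟩, Sum.inl_injective⟩, fun _ => rfl⟩

theorem isContained_gJoin_induce_some {X : SimpleGraph W} {H : SimpleGraph β} {π : β → ι}
    {p : ι} (G : SimpleGraph α) (h : X ⊑ H.induce (π ⁻¹' {p})) :
    X ⊑ (gJoin G H).induce (gJoinParts π ⁻¹' {some p}) := by
  obtain ⟨f, hf⟩ := isContained_induce_iff.1 h
  let inr : Copy H (gJoin G H) := ⟨⟨Sum.inr, fun h => h⟩, Sum.inr_injective⟩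
  exact isContained_induce_iff.2 ⟨inr.comp f, fun x => congrArg some (hf x)⟩

theorem isContained_gUnion_left (G : SimpleGraph α) (G' : SimpleGraph β) : G ⊑ gUnion G G' :=
  ⟨⟨⟨Sum.inl, fun h => h⟩, Sum.inl_injective⟩⟩

theorem isContained_gCopies {m : ℕ} (hm : 0 < m) (H : SimpleGraph α) : H ⊑ gCopies m H :=
  ⟨⟨⟨fun a => (⟨0, hm⟩, a), fun h => ⟨rfl, h⟩⟩, fun _ _ h => congrArg Prod.snd h⟩⟩

section

variable {ℓ r m : ℕ}

theorem delIndepStillPath_F₁ (hm : (ℓ + 1) / 2 ≤ m) : DelIndepStillPath (F₁ ℓ r m) ℓ (r - 1) :=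
  ((isJoinPartition_turanGraph hm).gJoin _ ((Fin.castLEEmb hm).trans .inr)
    ).delIndepStillPath_of_pathGraph (by simp)
    ((isContained_gUnion_left _ _).trans (isContained_gJoin_induce_none _ _ _))

theorem delIndepStillPath_F₂ (hm : (ℓ + 1) / 2 ≤ m) :
    DelIndepStillPath (F₂ r m) ℓ (r - 1) := by
  let e : Fin ((ℓ + 1) / 2) ↪ Fin m × Fin 2 := (Fin.castLEEmb hm).trans (.sectL _ 0)
  exact (((isJoinPartition_turanGraph hm).gJoin _ e).gJoin _ e).delIndepStillPath_of_gCopies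
    (by simp only [Fintype.card_option, Fintype.card_fin]; omega) (by omega)
    (p₀ := none) (p₁ := some none) (by simp)
    (isContained_gJoin_induce_none _ _ _)
    (isContained_gJoin_induce_some _ (isContained_gJoin_induce_none _ _ _))

theorem delIndepStillPath_F₃ (hℓ : 3 ≤ ℓ) (hm : (ℓ + 1) / 2 ≤ m) :
    DelIndepStillPath (F₃ ℓ r m) ℓ (r - 1) := by
  let e {γ : Type} : Fin ((ℓ + 1) / 2) ↪ γ ⊕ Fin m := (Fin.castLEEmb hm).trans .inr
  exact (((isJoinPartition_turanGraph hm).gJoin _ e).gJoin _ e).delIndepStillPath_of_top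
    (by simp only [Fintype.card_option, Fintype.card_fin]; omega) hℓ
    (p₀ := none) (p₁ := some none) (by simp)
    ((isContained_gCopies two_pos _).trans
      ((isContained_gUnion_left _ _).trans (isContained_gJoin_induce_none _ _ _)))
    (isContained_gJoin_induce_some _
      ((isContained_gUnion_left _ _).trans (isContained_gJoin_induce_none _ _ _)))

theorem delIndepStillPath_F₄ (hℓ : 3 ≤ ℓ) (hm : (ℓ + 1) / 2 ≤ m) :
    DelIndepStillPath (F₄ ℓ r m) ℓ (r - 1) := by
  let e {γ : Type} : Fin ((ℓ + 1) / 2) ↪ γ ⊕ Fin m := (Fin.castLEEmb hm).trans .inr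
  have hK₂ : (⊤ : SimpleGraph (Fin 2)) ⊑ (⊤ : SimpleGraph (Fin (ℓ - 1))) :=
    isContained_top_iff.2 ⟨Fin.castLEEmb (by omega)⟩
  exact (((isJoinPartition_turanGraph hm).gJoin _ e).gJoin _ e).delIndepStillPath_of_top
    (by simp only [Fintype.card_option, Fintype.card_fin]; omega) hℓ
    (p₀ := none) (p₁ := some none) (by simp)
    ((isContained_gUnion_left _ _).trans (isContained_gJoin_induce_none _ _ _))
    (isContained_gJoin_induce_some _
      (hK₂.trans
        ((isContained_gUnion_left _ _).trans (isContained_gJoin_induce_none _ _ _))))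

end

theorem DelIndepStillPath.not_containsCopy_gJoin_turanGraph {F : SimpleGraph V} {ℓ k : ℕ}
    (hF : DelIndepStillPath F ℓ k) (hk : 0 < k) {H : SimpleGraph α}
    (hH : ¬ ContainsCopy (pathGraph ℓ) H) (N : ℕ) :
    ¬ ContainsCopy F (gJoin H (turanGraph N k)) := by
  rintro ⟨f, hf, hfadj⟩
  let I : Fin k → Set V := fun j => {a | ∃ v : Fin N, f a = .inr v ∧ v % k = j}
  obtain ⟨g, hg, hgadj⟩ := hF I fun j a ha b hb hab => by
    obtain ⟨v, hav, hv⟩ := ha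
    obtain ⟨w, hbw, hw⟩ := hb
    have := hfadj hab
    rw [hav, hbw] at this
    exact turanGraph_adj.1 this (hv.trans hw.symm)
  have hleft : ∀ i, ∃ x, f (g i) = .inl x := by
    intro i
    rcases hfg : f (g i) with x | v
    · exact ⟨x, rfl⟩
    · refine absurd (Set.mem_iUnion.2 ⟨⟨v % k, Nat.mod_lt _ hk⟩, ?_⟩) (g i).2
      exact ⟨v, hfg, rfl⟩
  choose φ hφ using hleft
  refine hH ⟨φ, fun i j h => hg (Subtype.ext (hf (by rw [hφ, hφ, h]))), fun i j hij => ?_⟩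
  have := hfadj (a := g i) (b := g j) (hgadj hij)
  rwa [hφ, hφ] at this

/-- **Proposition.** For `r ≥ 2`, `ℓ ≥ 3`, `m ≥ 2ℓ` and `F₁, F₂, F₃, F₄` as above: if `H` is
any `P_ℓ`-free graph and `n ≥ |H|`, then `H ⊗ T(n - |H|, r-1)` is `{F₁,F₂,F₃,F₄}`-free;
indeed, after deleting any `r-1` independent sets from each `F_i`, the remaining graph still
contains a copy of `P_ℓ`. -/
theorem join_with_path_free_part_is_free (ℓ r m : ℕ) (hr : 2 ≤ r) (hℓ : 3 ≤ ℓ)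
    (hm : 2 * ℓ ≤ m) :
    (∀ (α : Type) [Fintype α] (H : SimpleGraph α), ¬ ContainsCopy (pathGraph ℓ) H →
      ∀ n : ℕ, Fintype.card α ≤ n →
        ¬ ContainsCopy (F₁ ℓ r m) (gJoin H (turanGraph (n - Fintype.card α) (r - 1))) ∧
        ¬ ContainsCopy (F₂ r m) (gJoin H (turanGraph (n - Fintype.card α) (r - 1))) ∧
        ¬ ContainsCopy (F₃ ℓ r m) (gJoin H (turanGraph (n - Fintype.card α) (r - 1))) ∧
        ¬ ContainsCopy (F₄ ℓ r m) (gJoin H (turanGraph (n - Fintype.card α) (r - 1)))) ∧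
    DelIndepStillPath (F₁ ℓ r m) ℓ (r - 1) ∧
    DelIndepStillPath (F₂ r m) ℓ (r - 1) ∧
    DelIndepStillPath (F₃ ℓ r m) ℓ (r - 1) ∧
    DelIndepStillPath (F₄ ℓ r m) ℓ (r - 1) := by
  have hm' : (ℓ + 1) / 2 ≤ m := by omega
  have hr' : 0 < r - 1 := by omega
  have h₁ := delIndepStillPath_F₁ (r := r) hm'
  have h₂ := delIndepStillPath_F₂ (r := r) hm'
  have h₃ := delIndepStillPath_F₃ (r := r) hℓ hm'
  have h₄ := delIndepStillPath_F₄ (r := r) hℓ hm'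
  refine ⟨fun α _ H hH n _ => ?_, h₁, h₂, h₃, h₄⟩
  exact ⟨h₁.not_containsCopy_gJoin_turanGraph hr' hH _,
    h₂.not_containsCopy_gJoin_turanGraph hr' hH _, h₃.not_containsCopy_gJoin_turanGraph hr' hH _,
    h₄.not_containsCopy_gJoin_turanGraph hr' hH _⟩
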